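/- arXiv:2006.14980 — 2 statements merged into one kernel-verified Lean document; each statement's English description precedes it below -/
import Mathlib

section
/- For every t ≥ 0 and every Borel set X ⊆ H with μ₀(X) > 0, one has the lower bound μ_t(X) ≥ (μ₀(X)/N_t) · exp( −(t/μ₀(X)) · ∫_X Φ dμ₀ ); in particular μ_t(X) > 0. -/
open MeasureTheory Real

/-- The tempering measure `μ_t`, defined by `dμ_t/dμ₀ = N_t⁻¹ exp (-t Φ)` where
`N_t = ∫ exp (-t Φ) dμ₀` is the normalizing constant. -/
noncomputable def temper {H : Type*} [MeasurableSpace H]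
    (μ₀ : Measure H) (Φ : H → ℝ) (t : ℝ) : Measure H :=
  μ₀.withDensity fun u =>
    ENNReal.ofReal ((∫ v, Real.exp (-t * Φ v) ∂μ₀)⁻¹ * Real.exp (-t * Φ u))

/-! Proof idea: by Jensen's inequality for the convex function `exp` on `X`,
`exp (⨍_X (-t Φ) dμ₀) ≤ ⨍_X exp (-t Φ) dμ₀`; multiplying by `μ₀(X) / N_t` gives the bound,
whose left-hand side is positive. -/

section

variable {α : Type*} [MeasurableSpace α] {μ : Measure α}

theorem measureReal_mul_exp_setAverage_le_setIntegral_exp {f : α → ℝ} {s : Set α}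
    (hs₀ : μ s ≠ 0) (hs : μ s ≠ ⊤) (hf : IntegrableOn f s μ)
    (hexp : IntegrableOn (fun x => exp (f x)) s μ) :
    μ.real s * exp ((μ.real s)⁻¹ * ∫ x in s, f x ∂μ) ≤ ∫ x in s, exp (f x) ∂μ := by
  have hjensen : exp (⨍ x in s, f x ∂μ) ≤ ⨍ x in s, exp (f x) ∂μ :=
    convexOn_exp.map_set_average_le continuous_exp.continuousOn isClosed_univ hs₀ hs
      (by simp) hf hexp
  have hpos : 0 < μ.real s := ENNReal.toReal_pos hs₀ hs
  rw [setAverage_eq, setAverage_eq, smul_eq_mul, smul_eq_mul] at hjensen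
  exact (le_inv_mul_iff₀ hpos).1 hjensen

theorem integrable_exp_neg_mul [IsFiniteMeasure μ] {Φ : α → ℝ} (hΦ : AEStronglyMeasurable Φ μ)
    (hΦ_nonneg : ∀ x, 0 ≤ Φ x) {t : ℝ} (ht : 0 ≤ t) :
    Integrable (fun x => exp (-t * Φ x)) μ := by
  refine Integrable.of_bound (continuous_exp.comp_aestronglyMeasurable (hΦ.const_mul (-t))) 1 ?_
  filter_upwards with x
  rw [norm_of_nonneg (exp_pos _).le, exp_le_one_iff]
  nlinarith [hΦ_nonneg x]

theorem toReal_temper_apply [SFinite μ] {Φ : α → ℝ} {t : ℝ}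
    (hint : Integrable (fun x => exp (-t * Φ x)) μ) (s : Set α) :
    (temper μ Φ t s).toReal = (∫ x, exp (-t * Φ x) ∂μ)⁻¹ * ∫ x in s, exp (-t * Φ x) ∂μ := by
  have hdensity_nonneg : ∀ x, 0 ≤ (∫ x, exp (-t * Φ x) ∂μ)⁻¹ * exp (-t * Φ x) := fun x =>
    mul_nonneg (inv_nonneg.2 (integral_nonneg fun _ => (exp_pos _).le)) (exp_pos _).le
  rw [temper, withDensity_apply', ← ofReal_integral_eq_lintegral_ofReal
      (hint.restrict.const_mul _) (.of_forall hdensity_nonneg),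
    ENNReal.toReal_ofReal (integral_nonneg hdensity_nonneg), integral_const_mul]

end

theorem tempering_measure_lower_bound_on_sets_general
    {H : Type*} [MeasurableSpace H]
    (μ₀ : Measure H) [IsProbabilityMeasure μ₀]
    (Φ : H → ℝ) (hΦnonneg : ∀ u, 0 ≤ Φ u)
    (hΦint : Integrable Φ μ₀) (t : ℝ) (ht : 0 ≤ t)
    (X : Set H) (hX0 : 0 < μ₀ X) :
    (μ₀ X).toReal / (∫ u, Real.exp (-t * Φ u) ∂μ₀) *
        Real.exp (-(t / (μ₀ X).toReal) * ∫ u in X, Φ u ∂μ₀)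
      ≤ (temper μ₀ Φ t X).toReal ∧
      0 < temper μ₀ Φ t X := by
  have hint := integrable_exp_neg_mul hΦint.aestronglyMeasurable hΦnonneg ht
  have hN : 0 < ∫ u, exp (-t * Φ u) ∂μ₀ := integral_exp_pos hint
  have hX : 0 < μ₀.real X := ENNReal.toReal_pos hX0.ne' (measure_ne_top μ₀ X)
  have hjensen := measureReal_mul_exp_setAverage_le_setIntegral_exp hX0.ne' (measure_ne_top μ₀ X)
    (hΦint.const_mul (-t)).integrableOn hint.integrableOn
  rw [integral_const_mul, ← mul_assoc, inv_mul_eq_div, neg_div] at hjensen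
  have hbound : (μ₀ X).toReal / (∫ u, exp (-t * Φ u) ∂μ₀) *
      exp (-(t / (μ₀ X).toReal) * ∫ u in X, Φ u ∂μ₀) ≤ (temper μ₀ Φ t X).toReal := by
    rw [toReal_temper_apply hint, div_eq_inv_mul, mul_assoc]
    exact mul_le_mul_of_nonneg_left hjensen (inv_nonneg.2 hN.le)
  refine ⟨hbound, ENNReal.toReal_pos_iff.1 (lt_of_lt_of_le ?_ hbound) |>.1⟩
  exact mul_pos (div_pos hX hN) (exp_pos _)

/-- Let `H` be a real separable Hilbert space with its Borel σ-algebra,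
`μ₀` a Borel probability measure on `H`, and `Φ : H → ℝ` measurable, nonnegative and
integrable w.r.t. `μ₀`.  For every `t ≥ 0` and every Borel set `X ⊆ H` with
`μ₀(X) > 0`, one has the lower bound
`μ_t(X) ≥ (μ₀(X) / N_t) · exp (-(t / μ₀(X)) · ∫_X Φ dμ₀)`;
in particular `μ_t(X) > 0`. -/
theorem tempering_measure_lower_bound_on_sets
    {H : Type*} [NormedAddCommGroup H] [InnerProductSpace ℝ H] [CompleteSpace H]
    [TopologicalSpace.SeparableSpace H] [MeasurableSpace H] [BorelSpace H]
    (μ₀ : Measure H) [IsProbabilityMeasure μ₀]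
    (Φ : H → ℝ) (hΦmeas : Measurable Φ) (hΦnonneg : ∀ u, 0 ≤ Φ u)
    (hΦint : Integrable Φ μ₀) (t : ℝ) (ht : 0 ≤ t)
    (X : Set H) (hX : MeasurableSet X) (hX0 : 0 < μ₀ X) :
    (μ₀ X).toReal / (∫ u, Real.exp (-t * Φ u) ∂μ₀) *
        Real.exp (-(t / (μ₀ X).toReal) * ∫ u in X, Φ u ∂μ₀)
      ≤ (temper μ₀ Φ t X).toReal ∧
      0 < temper μ₀ Φ t X :=
  tempering_measure_lower_bound_on_sets_general μ₀ Φ hΦnonneg hΦint t ht X hX0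
end

section
/- For all 0 ≤ s < t, the symmetrized Kullback–Leibler (Jeffreys) divergence between consecutive tempering measures satisfies the identity D_{KL,2}(μ_s, μ_t) = (t−s)·(⟨Φ⟩_s − ⟨Φ⟩_t). -/
open MeasureTheory Real

/-- The Kullback–Leibler divergence `D_KL(ν ‖ μ) = ∫ log (dν/dμ) dν` of two
(equivalent) probability measures. -/
noncomputable def klDivR {H : Type*} [MeasurableSpace H] (ν μ : Measure H) : ℝ :=
  ∫ u, Real.log ((ν.rnDeriv μ u).toReal) ∂ν

/-- The symmetrized Kullback–Leibler (Jeffreys) divergence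
`D_{KL,2}(μ, ν) = D_KL(ν ‖ μ) + D_KL(μ ‖ ν)`. -/
noncomputable def klDiv2R {H : Type*} [MeasurableSpace H] (μ ν : Measure H) : ℝ :=
  klDivR ν μ + klDivR μ ν

/-!
The tempering measure `μ_t` is the exponential tilt of `μ_s` by `-(t - s) Φ`. For a tilt
`ν = μ.tilted f` the log-likelihood ratio `log dν/dμ` equals `f - log ∫ exp f dμ`, so
`D_KL(ν ‖ μ) = ∫ f dν - log ∫ exp f dμ` and `D_KL(μ ‖ ν) = log ∫ exp f dμ - ∫ f dμ`:
in the Jeffreys divergence the normalizing constant cancels.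
-/

namespace MeasureTheory

variable {α : Type*} {mα : MeasurableSpace α} {μ : Measure α} {f : α → ℝ}

lemma klDivR_tilted_left_self [SigmaFinite μ] [NeZero μ]
    (hf : Integrable (fun x ↦ exp (f x)) μ) (hf_tilted : Integrable f (μ.tilted f)) :
    klDivR (μ.tilted f) μ = ∫ x, f x ∂(μ.tilted f) - log (∫ x, exp (f x) ∂μ) := by
  have := isProbabilityMeasure_tilted hf
  rw [klDivR, integral_congr_ae
      ((tilted_absolutelyContinuous μ f).ae_le (log_rnDeriv_tilted_left_self hf)),
    integral_sub hf_tilted (integrable_const _), integral_const, probReal_univ, one_smul]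

lemma klDivR_tilted_right_self [IsProbabilityMeasure μ]
    (hf : Integrable (fun x ↦ exp (f x)) μ) (hfμ : Integrable f μ) :
    klDivR μ (μ.tilted f) = log (∫ x, exp (f x) ∂μ) - ∫ x, f x ∂μ := by
  have hllr_self : llr μ μ =ᵐ[μ] 0 := llr_self μ
  have h := integral_llr_tilted_right (Measure.AbsolutelyContinuous.refl μ) hfμ hf
    ((integrable_zero _ _ μ).congr hllr_self.symm)
  rw [integral_congr_ae hllr_self] at h
  rw [klDivR, ← llr_def, h, Pi.zero_def, integral_zero]
  ring

lemma klDiv2R_tilted [IsProbabilityMeasure μ] (hf : Integrable (fun x ↦ exp (f x)) μ)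
    (hfμ : Integrable f μ) (hf_tilted : Integrable f (μ.tilted f)) :
    klDiv2R μ (μ.tilted f) = ∫ x, f x ∂(μ.tilted f) - ∫ x, f x ∂μ := by
  rw [klDiv2R, klDivR_tilted_left_self hf hf_tilted, klDivR_tilted_right_self hf hfμ]
  ring

end MeasureTheory

section Tempering

variable {H : Type*} [MeasurableSpace H] {μ₀ : Measure H} {Φ : H → ℝ}

lemma temper_eq_tilted (μ₀ : Measure H) (Φ : H → ℝ) (t : ℝ) :
    temper μ₀ Φ t = μ₀.tilted fun u ↦ -t * Φ u := by
  simp only [temper, Measure.tilted, div_eq_inv_mul]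

lemma integrable_exp_neg_mul_s10 [IsFiniteMeasure μ₀] (hΦ : Measurable Φ) (hΦ_nonneg : ∀ u, 0 ≤ Φ u)
    {r : ℝ} (hr : 0 ≤ r) : Integrable (fun u ↦ exp (-r * Φ u)) μ₀ := by
  refine Integrable.of_bound ((hΦ.const_mul (-r)).exp.aestronglyMeasurable) 1 ?_
  filter_upwards with u
  rw [norm_of_nonneg (exp_pos _).le, exp_le_one_iff]
  nlinarith [hΦ_nonneg u]

lemma isProbabilityMeasure_temper [IsFiniteMeasure μ₀] [NeZero μ₀] (hΦ : Measurable Φ)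
    (hΦ_nonneg : ∀ u, 0 ≤ Φ u) {r : ℝ} (hr : 0 ≤ r) :
    IsProbabilityMeasure (temper μ₀ Φ r) := by
  rw [temper_eq_tilted]
  exact isProbabilityMeasure_tilted (integrable_exp_neg_mul_s10 hΦ hΦ_nonneg hr)

lemma integrable_temper [IsFiniteMeasure μ₀] (hΦ : Measurable Φ) (hΦ_nonneg : ∀ u, 0 ≤ Φ u)
    (hΦ_int : Integrable Φ μ₀) {r : ℝ} (hr : 0 ≤ r) : Integrable Φ (temper μ₀ Φ r) := by
  rw [temper_eq_tilted, integrable_tilted_iff (integrable_exp_neg_mul_s10 hΦ hΦ_nonneg hr)]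
  refine hΦ_int.mono ((hΦ.const_mul (-r)).exp.mul hΦ).aestronglyMeasurable ?_
  filter_upwards with u
  rw [smul_eq_mul, norm_mul, norm_of_nonneg (exp_pos _).le]
  refine mul_le_of_le_one_left (norm_nonneg _) (exp_le_one_iff.2 ?_)
  nlinarith [hΦ_nonneg u]

lemma temper_tilted {s : ℝ} (hΦ_exp : Integrable (fun u ↦ exp (-s * Φ u)) μ₀) (t : ℝ) :
    (temper μ₀ Φ s).tilted (fun u ↦ -(t - s) * Φ u) = temper μ₀ Φ t := by
  rw [temper_eq_tilted, tilted_tilted hΦ_exp, temper_eq_tilted]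
  congr with u
  simp only [Pi.add_apply]
  ring

end Tempering

theorem tempering_jeffreys_divergence_identity_general
    {H : Type*} [MeasurableSpace H]
    (μ₀ : Measure H) [IsProbabilityMeasure μ₀]
    (Φ : H → ℝ) (hΦmeas : Measurable Φ) (hΦnonneg : ∀ u, 0 ≤ Φ u)
    (hΦsq : MemLp Φ 2 μ₀)
    (s t : ℝ) (hs : 0 ≤ s) (hst : s < t) :
    klDiv2R (temper μ₀ Φ s) (temper μ₀ Φ t) =
      (t - s) * ((∫ u, Φ u ∂(temper μ₀ Φ s)) - ∫ u, Φ u ∂(temper μ₀ Φ t)) := by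
  have hΦ_int : Integrable Φ μ₀ := hΦsq.integrable one_le_two
  have := isProbabilityMeasure_temper (μ₀ := μ₀) hΦmeas hΦnonneg hs
  have hΦ_int_s := integrable_temper hΦmeas hΦnonneg hΦ_int hs
  have hΦ_int_t := integrable_temper hΦmeas hΦnonneg hΦ_int (hs.trans hst.le)
  have htilt := temper_tilted (integrable_exp_neg_mul_s10 (μ₀ := μ₀) hΦmeas hΦnonneg hs) t
  rw [← htilt, klDiv2R_tilted
    (integrable_exp_neg_mul_s10 (μ₀ := temper μ₀ Φ s) hΦmeas hΦnonneg (sub_nonneg.2 hst.le))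
    (hΦ_int_s.const_mul _) (htilt ▸ hΦ_int_t.const_mul _), integral_const_mul,
    integral_const_mul]
  ring

/-- Let `H` be a real separable Hilbert space with its Borel σ-algebra,
`μ₀` a Borel probability measure on `H`, and `Φ : H → ℝ` measurable, nonnegative and
square-integrable w.r.t. `μ₀`.  For all `0 ≤ s < t`, the symmetrized Kullback–Leibler
(Jeffreys) divergence between consecutive tempering measures satisfies
`D_{KL,2}(μ_s, μ_t) = (t − s)·(⟨Φ⟩_s − ⟨Φ⟩_t)`. -/
theorem tempering_jeffreys_divergence_identity
    {H : Type*} [NormedAddCommGroup H] [InnerProductSpace ℝ H] [CompleteSpace H]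
    [TopologicalSpace.SeparableSpace H] [MeasurableSpace H] [BorelSpace H]
    (μ₀ : Measure H) [IsProbabilityMeasure μ₀]
    (Φ : H → ℝ) (hΦmeas : Measurable Φ) (hΦnonneg : ∀ u, 0 ≤ Φ u)
    (hΦsq : MemLp Φ 2 μ₀)
    (s t : ℝ) (hs : 0 ≤ s) (hst : s < t) :
    klDiv2R (temper μ₀ Φ s) (temper μ₀ Φ t) =
      (t - s) * ((∫ u, Φ u ∂(temper μ₀ Φ s)) - ∫ u, Φ u ∂(temper μ₀ Φ t)) :=
  tempering_jeffreys_divergence_identity_general μ₀ Φ hΦmeas hΦnonneg hΦsq s t hs hst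
end
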